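/- arXiv:1610.00921 — 2 statements merged into one kernel-verified Lean document; each statement's English description precedes it below -/
import Mathlib

section
/- Let Q = R/(z - α)^m with R a polynomial not vanishing at α and m ≥ 1. Then for every r > 0 there exists N such that for all n ≥ N, the n-th derivative Q^{(n)} has no zeroes in the disk |z| < r. -/
/-!
Expanding `R` in powers of `z - α` gives `Q = ∑ⱼ cⱼ (z - α)^(j - m)` with `c₀ = R(α) ≠ 0`, hence
`Q⁽ⁿ⁾(z) = ∑ⱼ cⱼ (j - m)ₙ (z - α)^(j - m - n)`, where `(x)ₙ` is the falling factorial. Once `n`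
exceeds `deg R`, the terms with `j ≥ m` vanish. Among the remaining ones, the term `j = 0` dominates
uniformly on bounded sets, since `|(j - m)ₙ| / |(-m)ₙ| ≤ (m - 1) / (m - 1 + n)` for `1 ≤ j < m`.
-/

open Polynomial Filter Topology Finset

theorem iteratedDeriv_sub_const_zpow {𝕜 : Type*} [NontriviallyNormedField 𝕜] (k : ℤ) (α z : 𝕜)
    (n : ℕ) :
    iteratedDeriv n (fun w => (w - α) ^ k) z =
      (descPochhammer 𝕜 n).eval (k : 𝕜) * (z - α) ^ (k - n) := by
  rw [iteratedDeriv_comp_sub_const n (fun w => w ^ k) α, iteratedDeriv_eq_iterate]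
  exact (iter_deriv_zpow k (z - α) n).trans (by rw [descPochhammer_eval_eq_prod_range])

theorem eval_div_sub_pow_eq_sum_zpow {K : Type*} [Field K] (R : K[X]) {α w : K} (hw : w ≠ α)
    (m : ℕ) {N : ℕ} (hN : R.natDegree < N) :
    R.eval w / (w - α) ^ m = ∑ j ∈ range N, (taylor α R).coeff j * (w - α) ^ ((j : ℤ) - m) := by
  rw [← taylor_eval_sub α, eval_eq_sum_range' (by rwa [natDegree_taylor]), sum_div]
  refine sum_congr rfl fun j _ => ?_
  rw [zpow_sub₀ (sub_ne_zero.2 hw), zpow_natCast, zpow_natCast, mul_div_assoc]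

theorem iteratedDeriv_eval_div_sub_pow {𝕜 : Type*} [NontriviallyNormedField 𝕜] [CompleteSpace 𝕜]
    (R : 𝕜[X]) {α z : 𝕜} (hz : z ≠ α) (m n : ℕ) {N : ℕ} (hN : R.natDegree < N) :
    iteratedDeriv n (fun w => R.eval w / (w - α) ^ m) z =
      ∑ j ∈ range N, (taylor α R).coeff j * (descPochhammer 𝕜 n).eval ((j : 𝕜) - m) *
        (z - α) ^ ((j : ℤ) - m - n) := by
  have hlocal : (fun w => R.eval w / (w - α) ^ m) =ᶠ[𝓝 z]
      fun w => ∑ j ∈ range N, (taylor α R).coeff j * (w - α) ^ ((j : ℤ) - m) := by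
    filter_upwards [isOpen_ne.mem_nhds hz] with w hw
    exact eval_div_sub_pow_eq_sum_zpow R hw m hN
  have hsmooth (j : ℕ) :
      ContDiffAt 𝕜 n (fun w => (taylor α R).coeff j * (w - α) ^ ((j : ℤ) - m)) z :=
    (analyticAt_const.mul
      ((analyticAt_id.sub analyticAt_const).zpow (sub_ne_zero.2 hz))).contDiffAt
  rw [hlocal.iteratedDeriv_eq, iteratedDeriv_fun_sum fun j _ => hsmooth j]
  refine sum_congr rfl fun j _ => ?_
  rw [iteratedDeriv_const_mul_field, iteratedDeriv_sub_const_zpow, mul_assoc]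
  push_cast
  rfl

theorem iteratedDeriv_eval_div_sub_pow_eq_principal {𝕜 : Type*} [NontriviallyNormedField 𝕜]
    [CompleteSpace 𝕜] (R : 𝕜[X]) {α z : 𝕜} (hz : z ≠ α) (m : ℕ) {n : ℕ}
    (hn : R.natDegree < n) :
    iteratedDeriv n (fun w => R.eval w / (w - α) ^ m) z =
      (z - α) ^ (-(m + n : ℤ)) * ∑ j ∈ range m,
        (taylor α R).coeff j * (descPochhammer 𝕜 n).eval ((j : 𝕜) - m) * (z - α) ^ j := by
  rw [iteratedDeriv_eval_div_sub_pow R hz m n (hn.trans_le (Nat.le_add_left n m)),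
    sum_range_add, mul_sum]
  have hvanish : ∀ i ∈ range n, (descPochhammer 𝕜 n).eval (((m + i : ℕ) : 𝕜) - m) = 0 := by
    intro i hi
    rw [Nat.cast_add, add_sub_cancel_left]
    exact descPochhammer_eval_coe_nat_of_lt (mem_range.1 hi)
  have htail : ∑ i ∈ range n, (taylor α R).coeff (m + i) *
      (descPochhammer 𝕜 n).eval (((m + i : ℕ) : 𝕜) - m) *
        (z - α) ^ (((m + i : ℕ) : ℤ) - m - n) = 0 :=
    sum_eq_zero fun i hi => by rw [hvanish i hi, mul_zero, zero_mul]
  rw [htail, add_zero]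
  refine sum_congr rfl fun j _ => ?_
  rw [show (j : ℤ) - m - n = j + -(m + n : ℤ) by ring, zpow_add₀ (sub_ne_zero.2 hz),
    zpow_natCast]
  ring

theorem norm_descPochhammer_eval_neg_natCast {𝕜 : Type*} [RCLike 𝕜] (k n : ℕ) :
    ‖(descPochhammer 𝕜 n).eval (-(k : 𝕜))‖ = k.ascFactorial n := by
  have h := ascPochhammer_eval_neg_eq_descPochhammer 𝕜 (-(k : 𝕜)) n
  rw [neg_neg, ascPochhammer_nat_eq_natCast_ascFactorial] at h
  rw [← RCLike.norm_natCast (K := 𝕜), h, norm_mul, norm_pow, norm_neg, norm_one, one_pow, one_mul]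

theorem Nat.ascFactorial_mul_add_le (n : ℕ) {i k : ℕ} (hik : i ≤ k) :
    i.ascFactorial n * (k + n) ≤ k * (k + 1).ascFactorial n := by
  rw [Nat.succ_ascFactorial, mul_comm]
  exact Nat.mul_le_mul_left _ (Nat.ascFactorial_le n hik)

theorem norm_descPochhammer_eval_sub_mul_le {𝕜 : Type*} [RCLike 𝕜] (n : ℕ) {j k : ℕ}
    (hj : 0 < j) (hjk : j ≤ k + 1) :
    ‖(descPochhammer 𝕜 n).eval ((j : 𝕜) - (k + 1 : ℕ))‖ * (k + n) ≤
      k * ‖(descPochhammer 𝕜 n).eval (-((k + 1 : ℕ) : 𝕜))‖ := by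
  have hshift : (j : 𝕜) - (k + 1 : ℕ) = -((k + 1 - j : ℕ) : 𝕜) := by
    push_cast [Nat.cast_sub hjk]
    ring
  rw [hshift, norm_descPochhammer_eval_neg_natCast, norm_descPochhammer_eval_neg_natCast]
  exact_mod_cast Nat.ascFactorial_mul_add_le n (by omega)

theorem sum_range_succ_ne_zero_of_norm_lt {E : Type*} [SeminormedAddCommGroup E] (f : ℕ → E)
    (m : ℕ) (h : ∑ j ∈ range m, ‖f (j + 1)‖ < ‖f 0‖) : ∑ j ∈ range (m + 1), f j ≠ 0 := by
  rw [sum_range_succ']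
  intro hzero
  have : ‖f 0‖ ≤ ∑ j ∈ range m, ‖f (j + 1)‖ := by
    rw [eq_neg_of_add_eq_zero_right hzero, norm_neg]
    exact norm_sum_le _ _
  exact this.not_gt h

theorem sum_mul_descPochhammer_mul_pow_ne_zero {𝕜 : Type*} [RCLike 𝕜] (c : ℕ → 𝕜) (k n : ℕ)
    {u : 𝕜} {ρ : ℝ} (hu : ‖u‖ ≤ ρ)
    (hdom : k * ∑ j ∈ range k, ‖c (j + 1)‖ * ρ ^ (j + 1) < ‖c 0‖ * (k + n)) :
    ∑ j ∈ range (k + 1), c j * (descPochhammer 𝕜 n).eval ((j : 𝕜) - (k + 1 : ℕ)) * u ^ j ≠ 0 := by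
  refine sum_range_succ_ne_zero_of_norm_lt _ _ ?_
  set A := ‖(descPochhammer 𝕜 n).eval (-((k + 1 : ℕ) : 𝕜))‖ with hA_def
  have hA : 0 < A := by
    rw [hA_def, norm_descPochhammer_eval_neg_natCast]
    exact_mod_cast Nat.ascFactorial_pos k n
  have hρ : 0 ≤ ρ := (norm_nonneg u).trans hu
  have hkn : (0 : ℝ) < k + n := by
    refine pos_of_mul_pos_right (lt_of_le_of_lt ?_ hdom) (norm_nonneg _)
    exact mul_nonneg k.cast_nonneg (sum_nonneg fun j _ => by positivity)
  refine lt_of_mul_lt_mul_right ?_ hkn.le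
  calc (∑ j ∈ range k, ‖c (j + 1) * (descPochhammer 𝕜 n).eval (((j + 1 : ℕ) : 𝕜) - (k + 1 : ℕ)) *
          u ^ (j + 1)‖) * (k + n)
      = ∑ j ∈ range k, ‖c (j + 1)‖ *
          (‖(descPochhammer 𝕜 n).eval (((j + 1 : ℕ) : 𝕜) - (k + 1 : ℕ))‖ * (k + n)) *
          ‖u‖ ^ (j + 1) := by
        rw [sum_mul]
        refine sum_congr rfl fun j _ => ?_
        rw [norm_mul, norm_mul, norm_pow]
        ring
    _ ≤ ∑ j ∈ range k, ‖c (j + 1)‖ * (k * A) * ρ ^ (j + 1) := by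
        gcongr ∑ j ∈ range k, ‖c (j + 1)‖ * ?_ * ?_ ^ (j + 1) with j hj
        exact norm_descPochhammer_eval_sub_mul_le n j.succ_pos (by simpa using (mem_range.1 hj).le)
    _ = k * (∑ j ∈ range k, ‖c (j + 1)‖ * ρ ^ (j + 1)) * A := by
        rw [mul_sum, sum_mul]
        refine sum_congr rfl fun j _ => ?_
        ring
    _ < ‖c 0‖ * (k + n) * A := mul_lt_mul_of_pos_right hdom hA
    _ = ‖c 0 * (descPochhammer 𝕜 n).eval (((0 : ℕ) : 𝕜) - (k + 1 : ℕ)) * u ^ 0‖ * (k + n) := by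
        rw [Nat.cast_zero, zero_sub, pow_zero, mul_one, norm_mul]
        ring

theorem single_pole_no_zeroes_in_disk_general (R : Polynomial ℂ) (α : ℂ) (m : ℕ) (hm : 1 ≤ m)
    (hR : R.eval α ≠ 0) (r : ℝ) :
    ∃ N : ℕ, ∀ n ≥ N, ∀ z : ℂ, ‖z‖ < r → z ≠ α →
      iteratedDeriv n (fun w => R.eval w / (w - α) ^ m) z ≠ 0 := by
  obtain ⟨k, rfl⟩ : ∃ k, m = k + 1 := ⟨m - 1, by omega⟩
  set c : ℕ → ℂ := fun j => (taylor α R).coeff j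
  have hc0 : 0 < ‖c 0‖ := by simpa [c, taylor_coeff_zero] using hR
  set C := ∑ j ∈ range k, ‖c (j + 1)‖ * (r + ‖α‖) ^ (j + 1)
  have hlarge : ∀ᶠ n : ℕ in atTop, R.natDegree < n ∧ k * C < ‖c 0‖ * (k + n) :=
    (eventually_gt_atTop _).and <|
      ((tendsto_atTop_add_const_left _ _ tendsto_natCast_atTop_atTop).const_mul_atTop
        hc0).eventually_gt_atTop _
  obtain ⟨N, hN⟩ := eventually_atTop.1 hlarge
  refine ⟨N, fun n hn z hzr hz => ?_⟩
  obtain ⟨hdeg, hdom⟩ := hN n hn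
  have hzα : ‖z - α‖ ≤ r + ‖α‖ := (norm_sub_le z α).trans (by linarith)
  rw [iteratedDeriv_eval_div_sub_pow_eq_principal R hz _ hdeg]
  exact mul_ne_zero (zpow_ne_zero _ (sub_ne_zero.2 hz))
    (sum_mul_descPochhammer_mul_pow_ne_zero c k n hzα hdom)

/-- If `Q = R/(z - α)^m` with `R(α) ≠ 0` and `m ≥ 1`, then for every `r > 0` the disk
`|z| < r` contains no zeroes of `Q⁽ⁿ⁾` for all sufficiently large `n`. -/
theorem single_pole_no_zeroes_in_disk (R : Polynomial ℂ) (α : ℂ) (m : ℕ) (hm : 1 ≤ m)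
    (hR : R.eval α ≠ 0) (r : ℝ) (hr : 0 < r) :
    ∃ N : ℕ, ∀ n ≥ N, ∀ z : ℂ, ‖z‖ < r → z ≠ α →
      iteratedDeriv n (fun w => R.eval w / (w - α) ^ m) z ≠ 0 :=
  single_pole_no_zeroes_in_disk_general R α m hm hR r
end

section
/- Let Q(z) = Σ_{j=1}^d α_j (z - z_j)^{-s} with z_1,...,z_d distinct and s ≥ 1. Then for every n ≥ 0, the function y = Q^{(n)} satisfies the differential equation Σ_{i=0}^d (e_i(z) / ((s+n)(s+n+1)⋯(s+n+i-1))) y^{(i)} = 0 on ℂ \ {z_1,...,z_d}, where e_i(z) is the i-th elementary symmetric polynomial in z - z_1, ..., z - z_d and e_0 = 1 (the empty product in the denominator for i = 0 being 1). -/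
open Complex Finset

/-!
The `m`-th derivative of `(z - z_j)^{-s}` is `(-s)(-s-1)⋯(-s-m+1) (z - z_j)^{-s-m}`, so dividing
the `(n+i)`-th derivative by `(s+n)(s+n+1)⋯(s+n+i-1)` leaves `(-1)^i` times the `n`-th one,
times `(z - z_j)^{-i}`. After factoring out `(z - z_j)^{-s-n-d}`, the contribution of the `j`-th
pole is `∑_i (-1)^i e_i(z) w_j^{d-i}` with `w_j = z - z_j`, the value at `w_j` of
`∏_k (X - w_k)`, which vanishes.
-/

theorem Multiset.sum_neg_one_pow_mul_esymm_mul_pow_eq_zero {R : Type*} [CommRing R]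
    {M : Multiset R} {t : R} (ht : t ∈ M) :
    ∑ i ∈ Finset.range (card M + 1), (-1) ^ i * M.esymm i * t ^ (card M - i) = 0 := by
  have h := congrArg (Polynomial.eval t) (Multiset.prod_X_sub_X_eq_sum_esymm M)
  rw [Polynomial.eval_multiset_prod, Polynomial.eval_finsetSum,
    Multiset.prod_eq_zero
      (Multiset.mem_map.2 ⟨_, Multiset.mem_map.2 ⟨t, ht, rfl⟩, by simp⟩)] at h
  simpa [mul_assoc] using h.symm

section IteratedDeriv

variable {𝕜 : Type*} [NontriviallyNormedField 𝕜]

theorem iteratedDeriv_sub_const_zpow_s10 (m : ℤ) (a z : 𝕜) (k : ℕ) :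
    iteratedDeriv k (fun w => (w - a) ^ m) z =
      (∏ i ∈ range k, ((m : 𝕜) - i)) * (z - a) ^ (m - k) := by
  rw [iteratedDeriv_comp_sub_const (f := fun w => w ^ m), iteratedDeriv_eq_iterate]
  exact iter_deriv_zpow m (z - a) k

theorem iteratedDeriv_sum_div_sub_pow {ι : Type*} [Fintype ι] (α a : ι → 𝕜) (s k : ℕ)
    {z : 𝕜} (hz : ∀ j, z ≠ a j) :
    iteratedDeriv k (fun w => ∑ j, α j / (w - a j) ^ s) z =
      ∑ j, α j * (∏ i ∈ range k, (-(s : 𝕜) - i)) * (z - a j) ^ (-(s : ℤ) - k) := by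
  have hsmooth (j : ι) : ContDiffAt 𝕜 k (fun w => α j / (w - a j) ^ s) z :=
    contDiffAt_const.div ((contDiffAt_id.sub contDiffAt_const).pow s)
      (pow_ne_zero s (sub_ne_zero.2 (hz j)))
  rw [iteratedDeriv_fun_sum fun j _ => hsmooth j]
  refine sum_congr rfl fun j _ => ?_
  have hzpow : (fun w => α j / (w - a j) ^ s) = fun w => α j * (w - a j) ^ (-(s : ℤ)) := by
    simp only [zpow_neg, zpow_natCast, div_eq_mul_inv]
  rw [hzpow, iteratedDeriv_const_mul_field, iteratedDeriv_sub_const_zpow_s10]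
  push_cast
  ring

end IteratedDeriv

theorem prod_range_add_neg_sub {R : Type*} [CommRing R] (x : R) (n k : ℕ) :
    ∏ i ∈ range (n + k), (-x - i) =
      (∏ i ∈ range n, (-x - i)) * ((-1) ^ k * ∏ i ∈ range k, (x + n + i)) := by
  rw [prod_range_add, pow_eq_prod_const, ← prod_mul_distrib]
  congr 1
  refine prod_congr rfl fun i _ => ?_
  push_cast
  ring

theorem derivatives_satisfy_ode_general (d : ℕ) (zv : Fin d → ℂ) (α : Fin d → ℂ)
    (s : ℕ) (hs : 1 ≤ s) (n : ℕ) (z : ℂ) (hzp : ∀ j, z ≠ zv j) :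
    ∑ i ∈ Finset.range (d + 1),
      ((Multiset.map (fun j => z - zv j) Finset.univ.val).esymm i /
          ∏ k ∈ Finset.range i, ((s : ℂ) + n + k)) *
        iteratedDeriv (n + i) (fun w => ∑ j : Fin d, α j / (w - zv j) ^ s) z = 0 := by
  set M := Multiset.map (fun j => z - zv j) Finset.univ.val
  have hcard : Multiset.card M = d := by simp [M]
  have hP (i : ℕ) : ∏ k ∈ range i, ((s : ℂ) + n + k) ≠ 0 :=
    prod_ne_zero_iff.2 fun k _ => by exact_mod_cast (by omega : s + n + k ≠ 0)
  simp_rw [iteratedDeriv_sum_div_sub_pow α zv s _ hzp, prod_range_add_neg_sub, mul_sum]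
  rw [sum_comm]
  refine sum_eq_zero fun j _ => ?_
  have ht : z - zv j ≠ 0 := sub_ne_zero.2 (hzp j)
  calc _ = α j * (∏ k ∈ range n, (-(s : ℂ) - k)) *
          (z - zv j) ^ (-(s : ℤ) - (n + d : ℕ)) *
        ∑ i ∈ range (Multiset.card M + 1),
          (-1) ^ i * M.esymm i * (z - zv j) ^ (Multiset.card M - i) := by
        rw [hcard, mul_sum]
        refine sum_congr rfl fun i hi => ?_
        have hid : i ≤ d := Nat.lt_succ_iff.1 (mem_range.1 hi)
        have hshift : (z - zv j) ^ (-(s : ℤ) - (n + i : ℕ)) =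
            (z - zv j) ^ (-(s : ℤ) - (n + d : ℕ)) * (z - zv j) ^ (d - i) := by
          rw [← zpow_natCast, ← zpow_add₀ ht]
          congr 1
          omega
        rw [hshift]
        field_simp [hP i]
    _ = 0 := by
      rw [Multiset.sum_neg_one_pow_mul_esymm_mul_pow_eq_zero
        (Multiset.mem_map.2 ⟨j, mem_univ_val j, rfl⟩), mul_zero]

/-- For `Q(z) = ∑_j α_j (z - z_j)^{-s}`, the derivative `y = Q⁽ⁿ⁾` satisfies
`∑_{i=0}^d (e_i(z) / ((s+n)(s+n+1)⋯(s+n+i-1))) y^{(i)} = 0` away from the poles, where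
`e_i(z)` is the `i`-th elementary symmetric polynomial in `z - z_1, …, z - z_d`. -/
theorem derivatives_satisfy_ode (d : ℕ) (hd : 2 ≤ d) (zv : Fin d → ℂ)
    (hz : Function.Injective zv) (α : Fin d → ℂ) (hα : ∀ j, α j ≠ 0)
    (s : ℕ) (hs : 1 ≤ s) (n : ℕ) (z : ℂ) (hzp : ∀ j, z ≠ zv j) :
    ∑ i ∈ Finset.range (d + 1),
      ((Multiset.map (fun j => z - zv j) Finset.univ.val).esymm i /
          ∏ k ∈ Finset.range i, ((s : ℂ) + n + k)) *
        iteratedDeriv (n + i) (fun w => ∑ j : Fin d, α j / (w - zv j) ^ s) z = 0 :=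
  derivatives_satisfy_ode_general d zv α s hs n z hzp
end
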